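/- arXiv:2202.01419 — 4 statements merged into one kernel-verified Lean document; each statement's English description precedes it below -/
import Mathlib

section
/- The set A(T) of attractive points of T is a closed and convex subset of H. -/
/-!
`A(T)` is the intersection over `x ∈ C` of the sets `{z | ‖T x - z‖ ≤ ‖x - z‖}`. After squaring,
the `‖z‖²` terms cancel and each such set becomes the closed half-space
`{z | ‖T x‖² - ‖x‖² ≤ 2 ⟪T x - x, z⟫}`.
-/

open scoped RealInnerProductSpace

section AttractivePoints

variable {H : Type*} [NormedAddCommGroup H] [InnerProductSpace ℝ H]

theorem norm_sub_le_norm_sub_iff_inner (u v z : H) :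
    ‖u - z‖ ≤ ‖v - z‖ ↔ ‖u‖ ^ 2 - ‖v‖ ^ 2 ≤ 2 * ⟪u - v, z⟫ := by
  rw [← sq_le_sq₀ (norm_nonneg _) (norm_nonneg _), norm_sub_sq_real, norm_sub_sq_real,
    inner_sub_left]
  constructor <;> intro h <;> linarith

theorem convex_setOf_norm_sub_le_norm_sub (u v : H) :
    Convex ℝ {z : H | ‖u - z‖ ≤ ‖v - z‖} := by
  simp only [norm_sub_le_norm_sub_iff_inner]
  exact convex_halfSpace_ge ((2 : ℝ) • innerₛₗ ℝ (u - v)).isLinear _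

end AttractivePoints

theorem isClosed_setOf_norm_sub_le_norm_sub {E : Type*} [SeminormedAddCommGroup E] (u v : E) :
    IsClosed {z : E | ‖u - z‖ ≤ ‖v - z‖} :=
  isClosed_le (by fun_prop) (by fun_prop)

theorem attractive_points_closed_convex_general
    {H : Type*} [NormedAddCommGroup H] [InnerProductSpace ℝ H]
    (C : Set H) (T : H → H) :
    IsClosed {z : H | ∀ x ∈ C, ‖T x - z‖ ≤ ‖x - z‖} ∧
    Convex ℝ {z : H | ∀ x ∈ C, ‖T x - z‖ ≤ ‖x - z‖} := by
  have hA : {z : H | ∀ x ∈ C, ‖T x - z‖ ≤ ‖x - z‖} = ⋂ x ∈ C, {z | ‖T x - z‖ ≤ ‖x - z‖} := by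
    ext z
    simp only [Set.mem_ofPred_eq, Set.mem_iInter]
  rw [hA]
  exact ⟨isClosed_biInter fun x _ => isClosed_setOf_norm_sub_le_norm_sub (T x) x,
    convex_iInter₂ fun x _ => convex_setOf_norm_sub_le_norm_sub (T x) x⟩

theorem attractive_points_closed_convex
    {H : Type*} [NormedAddCommGroup H] [InnerProductSpace ℝ H]
    (C : Set H) (hC : C.Nonempty) (T : H → H) :
    IsClosed {z : H | ∀ x ∈ C, ‖T x - z‖ ≤ ‖x - z‖} ∧
    Convex ℝ {z : H | ∀ x ∈ C, ‖T x - z‖ ≤ ‖x - z‖} :=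
  attractive_points_closed_convex_general C T
end

section
/- Let T : C → H have an attractive point and suppose F(T) ⊆ A(T). Define T̃ : H → H by T̃x = Tx for x ∈ C and T̃x = P_{A(T)}(x) otherwise. Then F(T̃) = A(T) and T̃ is quasinonexpansive. -/
open RealInnerProductSpace

lemma attractive_convex {H : Type*} [NormedAddCommGroup H] [InnerProductSpace ℝ H]
    (C : Set H) (T : H → H) :
    Convex ℝ {z : H | ∀ x ∈ C, ‖T x - z‖ ≤ ‖x - z‖} := by
  have h : {z : H | ∀ x ∈ C, ‖T x - z‖ ≤ ‖x - z‖} =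
      ⋂ x ∈ C, {z : H | 2 * ⟪x - T x, z⟫ ≤ ‖x‖ ^ 2 - ‖T x‖ ^ 2} := by
    ext z
    simp only [Set.mem_iInter, Set.mem_setOf_eq]
    refine forall₂_congr fun x hx => ?_
    rw [← pow_le_pow_iff_left₀ (norm_nonneg _) (norm_nonneg _) two_ne_zero]
    have e1 := @norm_sub_sq_real H _ _ (T x) z
    have e2 := @norm_sub_sq_real H _ _ x z
    have e3 : ⟪x - T x, z⟫ = ⟪x, z⟫ - ⟪T x, z⟫ := inner_sub_left _ _ _
    constructor <;> intro h <;> nlinarith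
  rw [h]
  refine convex_iInter fun x => convex_iInter fun _ => ?_
  intro z1 hz1 z2 hz2 a b ha hb hab
  simp only [Set.mem_setOf_eq, inner_add_right, real_inner_smul_right] at *
  nlinarith

theorem extension_quasinonexpansive_fixed_eq_attractive
    {H : Type*} [NormedAddCommGroup H] [InnerProductSpace ℝ H]
    (C : Set H) (hC : C.Nonempty) (T : H → H)
    (A : Set H) (hA : A = {z : H | ∀ x ∈ C, ‖T x - z‖ ≤ ‖x - z‖})
    (hAne : A.Nonempty)
    (hFA : ∀ z ∈ C, T z = z → z ∈ A)
    (P : H → H) (hP : ∀ x : H, P x ∈ A ∧ ∀ y ∈ A, ‖x - P x‖ ≤ ‖x - y‖)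
    (S : H → H) (hS₁ : ∀ x ∈ C, S x = T x) (hS₂ : ∀ x ∉ C, S x = P x) :
    {z : H | S z = z} = A ∧
    ({z : H | S z = z}.Nonempty ∧
      ∀ x : H, ∀ z : H, S z = z → ‖S x - z‖ ≤ ‖x - z‖) := by
  have hconv : Convex ℝ A := hA ▸ attractive_convex C T
  -- key projection inequality
  have hproj : ∀ x : H, ∀ z ∈ A, ‖P x - z‖ ≤ ‖x - z‖ := by
    intro x z hz
    obtain ⟨hPx, hmin⟩ := hP x
    haveI : Nonempty A := ⟨⟨P x, hPx⟩⟩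
    have hinf : ‖x - P x‖ = ⨅ w : A, ‖x - (w : H)‖ := by
      refine le_antisymm (le_ciInf fun w => hmin w w.2) ?_
      exact ciInf_le ⟨0, by rintro r ⟨w, rfl⟩; exact norm_nonneg _⟩ (⟨P x, hPx⟩ : A)
    have hineq : ⟪x - P x, z - P x⟫ ≤ 0 :=
      (norm_eq_iInf_iff_real_inner_le_zero hconv hPx).mp hinf z hz
    have e : ‖x - z‖ ^ 2 = ‖x - P x‖ ^ 2 + 2 * ⟪x - P x, P x - z⟫ + ‖P x - z‖ ^ 2 := by
      have := @norm_add_sq_real H _ _ (x - P x) (P x - z)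
      simpa using this
    have h2 : ⟪x - P x, P x - z⟫ = -⟪x - P x, z - P x⟫ := by
      rw [← inner_neg_right]
      congr 1; abel
    nlinarith [norm_nonneg (P x - z), norm_nonneg (x - z), norm_nonneg (x - P x)]
  have hfix : {z : H | S z = z} = A := by
    ext z
    simp only [Set.mem_setOf_eq]
    constructor
    · intro h
      by_cases hz : z ∈ C
      · exact hFA z hz ((hS₁ z hz).symm.trans h)
      · have : P z = z := (hS₂ z hz).symm.trans h
        exact this ▸ (hP z).1
    · intro h
      by_cases hz : z ∈ C
      · have : ‖T z - z‖ ≤ ‖z - z‖ := (hA ▸ h) z hz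
        rw [sub_self, norm_zero] at this
        have := le_antisymm this (norm_nonneg _)
        rw [hS₁ z hz, ← sub_eq_zero]
        exact norm_eq_zero.mp this
      · have : ‖z - P z‖ ≤ ‖z - z‖ := (hP z).2 z h
        rw [sub_self, norm_zero] at this
        have := le_antisymm this (norm_nonneg _)
        rw [hS₂ z hz, ← sub_eq_zero, ← neg_sub]
        simp [norm_eq_zero.mp this]
  refine ⟨hfix, hfix ▸ hAne, ?_⟩
  intro x z hz
  have hzA : z ∈ A := hfix ▸ hz
  by_cases hx : x ∈ C
  · rw [hS₁ x hx]
    exact (hA ▸ hzA) x hx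
  · rw [hS₂ x hx]
    exact hproj x z hzA
end

section
/- Let T : C → H have an attractive point and suppose every asymptotic fixed point of T is an attractive point of T (F̂(T) ⊆ A(T)). Define T̃ : H → H by T̃x = Tx for x ∈ C and T̃x = P_{A(T)}(x) otherwise. Then F̂(T̃) = F(T̃), i.e., I − T̃ is demiclosed at 0. -/
open Filter Topology RealInnerProductSpace

private lemma le_of_sq_le_sq' {a b : ℝ} (ha : 0 ≤ a) (hb : 0 ≤ b)
    (h : a ^ 2 ≤ b ^ 2) : a ≤ b := by nlinarith

theorem extension_demiclosed_of_asymptotic_subset_attractive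
    {H : Type*} [NormedAddCommGroup H] [InnerProductSpace ℝ H]
    (C : Set H) (hC : C.Nonempty) (T : H → H)
    (A : Set H) (hA : A = {z : H | ∀ x ∈ C, ‖T x - z‖ ≤ ‖x - z‖})
    (hAne : A.Nonempty)
    (hFhat : ∀ z : H, (∃ x : ℕ → H, (∀ n, x n ∈ C) ∧
        Tendsto (fun n => x n - T (x n)) atTop (𝓝 0) ∧
        (∀ y : H, Tendsto (fun n => ⟪x n, y⟫) atTop (𝓝 ⟪z, y⟫))) → z ∈ A)
    (P : H → H) (hP : ∀ x : H, P x ∈ A ∧ ∀ y ∈ A, ‖x - P x‖ ≤ ‖x - y‖)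
    (S : H → H) (hS₁ : ∀ x ∈ C, S x = T x) (hS₂ : ∀ x ∉ C, S x = P x) :
    {z : H | ∃ x : ℕ → H,
        Tendsto (fun n => x n - S (x n)) atTop (𝓝 0) ∧
        (∀ y : H, Tendsto (fun n => ⟪x n, y⟫) atTop (𝓝 ⟪z, y⟫))} =
      {z : H | S z = z} := by
  -- Points of A are fixed by S
  have hAfix : ∀ z ∈ A, S z = z := by
    intro z hz
    by_cases hzC : z ∈ C
    · have h := hA ▸ hz
      have h2 : ‖T z - z‖ ≤ ‖z - z‖ := h z hzC
      rw [sub_self, norm_zero] at h2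
      have h3 : T z - z = 0 := norm_le_zero_iff.mp (le_antisymm h2 (norm_nonneg _)).le
      rw [hS₁ z hzC, sub_eq_zero.mp h3]
    · have h2 : ‖z - P z‖ ≤ ‖z - z‖ := (hP z).2 z hz
      rw [sub_self, norm_zero] at h2
      have h3 : z - P z = 0 := norm_le_zero_iff.mp h2
      rw [hS₂ z hzC, ← sub_eq_zero.mp h3]
  ext z
  simp only [Set.mem_setOf_eq]
  constructor
  · rintro ⟨x, hx1, hx2⟩
    have hzA : z ∈ A := by
      by_cases hfreq : ∃ᶠ n in atTop, x n ∈ C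
      · obtain ⟨φ, hφ, hφC⟩ := Filter.extraction_of_frequently_atTop hfreq
        apply hFhat
        refine ⟨x ∘ φ, hφC, ?_, ?_⟩
        · have heq : (fun n => (x ∘ φ) n - T ((x ∘ φ) n)) =
              (fun n => x n - S (x n)) ∘ φ := by
            funext n
            simp only [Function.comp_apply, hS₁ _ (hφC n)]
          rw [heq]
          exact hx1.comp hφ.tendsto_atTop
        · intro y
          exact (hx2 y).comp hφ.tendsto_atTop
      · have hev : ∀ᶠ n in atTop, x n ∉ C := not_frequently.mp hfreq
        have hSP : (fun n => x n - S (x n)) =ᶠ[atTop] fun n => x n - P (x n) :=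
          hev.mono fun n hn => by simp only []; rw [hS₂ _ hn]
        have hxP : Tendsto (fun n => x n - P (x n)) atTop (𝓝 0) :=
          hx1.congr' hSP
        rw [hA]
        intro x₀ hx₀
        -- membership inequalities for P (x n)
        have key : ∀ n, 2 * ⟪P (x n), x₀ - T x₀⟫ ≤ ‖x₀‖ ^ 2 - ‖T x₀‖ ^ 2 := by
          intro n
          have hmem := hA ▸ (hP (x n)).1
          have h := hmem x₀ hx₀
          have hsq : ‖T x₀ - P (x n)‖ ^ 2 ≤ ‖x₀ - P (x n)‖ ^ 2 :=
            pow_le_pow_left₀ (norm_nonneg _) h 2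
          have e1 := @norm_sub_sq_real H _ _ (T x₀) (P (x n))
          have e2 := @norm_sub_sq_real H _ _ x₀ (P (x n))
          have e3 : ⟪P (x n), x₀ - T x₀⟫ = ⟪P (x n), x₀⟫ - ⟪P (x n), T x₀⟫ :=
            inner_sub_right _ _ _
          have e4 : ⟪P (x n), x₀⟫ = ⟪x₀, P (x n)⟫ := real_inner_comm _ _
          have e5 : ⟪P (x n), T x₀⟫ = ⟪T x₀, P (x n)⟫ := real_inner_comm _ _
          linarith [hsq, e1, e2]
        have h2 : Tendsto (fun n => ⟪x n - P (x n), x₀ - T x₀⟫) atTop (𝓝 0) := by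
          have := Filter.Tendsto.inner (𝕜 := ℝ) hxP (tendsto_const_nhds (x := x₀ - T x₀))
          simpa using this
        have hlim : Tendsto (fun n => ⟪P (x n), x₀ - T x₀⟫) atTop
            (𝓝 ⟪z, x₀ - T x₀⟫) := by
          have hcomb := (hx2 (x₀ - T x₀)).sub h2
          have heq : (fun n => ⟪x n, x₀ - T x₀⟫ - ⟪x n - P (x n), x₀ - T x₀⟫) =
              fun n => ⟪P (x n), x₀ - T x₀⟫ := by
            funext n
            rw [inner_sub_left]
            ring
          rw [heq, sub_zero] at hcomb
          exact hcomb
        have final : 2 * ⟪z, x₀ - T x₀⟫ ≤ ‖x₀‖ ^ 2 - ‖T x₀‖ ^ 2 :=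
          le_of_tendsto (hlim.const_mul 2) (Filter.Eventually.of_forall key)
        -- conclude the norm inequality
        apply le_of_sq_le_sq' (norm_nonneg _) (norm_nonneg _)
        have e1 := @norm_sub_sq_real H _ _ (T x₀) z
        have e2 := @norm_sub_sq_real H _ _ x₀ z
        have e3 : ⟪z, x₀ - T x₀⟫ = ⟪z, x₀⟫ - ⟪z, T x₀⟫ := inner_sub_right _ _ _
        have e4 : ⟪z, x₀⟫ = ⟪x₀, z⟫ := real_inner_comm _ _
        have e5 : ⟪z, T x₀⟫ = ⟪T x₀, z⟫ := real_inner_comm _ _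
        linarith
    exact hAfix z hzA
  · intro hz
    refine ⟨fun _ => z, ?_, ?_⟩
    · simpa [hz] using tendsto_const_nhds (x := (0 : H))
    · intro y
      exact tendsto_const_nhds
end

section
/- If P is the metric projection of a Hilbert space H onto a nonempty closed convex set D, then I − P is demiclosed at 0: whenever xₙ ⇀ z weakly and xₙ − P(xₙ) → 0 strongly, it follows that z ∈ D (equivalently P(z) = z). -/
open Filter Topology RealInnerProductSpace

theorem metric_projection_demiclosed
    {H : Type*} [NormedAddCommGroup H] [InnerProductSpace ℝ H]
    (D : Set H) (hD : D.Nonempty) (hDc : IsClosed D) (hDconv : Convex ℝ D)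
    (P : H → H) (hP : ∀ x : H, P x ∈ D ∧ ∀ y ∈ D, ‖x - P x‖ ≤ ‖x - y‖)
    (x : ℕ → H) (z : H)
    (hweak : ∀ y : H, Tendsto (fun n => ⟪x n, y⟫) atTop (𝓝 ⟪z, y⟫))
    (hstrong : Tendsto (fun n => x n - P (x n)) atTop (𝓝 0)) :
    z ∈ D ∧ P z = z := by
  -- variational inequality for the projection
  have varineq : ∀ u : H, ∀ y ∈ D, ⟪u - P u, y - P u⟫ ≤ 0 := by
    intro u y hy
    haveI : Nonempty D := hD.to_subtype
    have hinf : ‖u - P u‖ = ⨅ w : D, ‖u - w‖ := by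
      refine le_antisymm (le_ciInf fun w => (hP u).2 w w.2) ?_
      exact ciInf_le ⟨0, by rintro r ⟨w, rfl⟩; positivity⟩ (⟨P u, (hP u).1⟩ : D)
    exact ((norm_eq_iInf_iff_real_inner_le_zero hDconv (hP u).1).mp hinf) y hy
  -- P (x n) ⇀ z weakly, tested against z - P z
  set v := z - P z with hv
  have h1 : Tendsto (fun n => ⟪x n - P (x n), v⟫) atTop (𝓝 0) := by
    have : Tendsto (fun n => ⟪x n - P (x n), v⟫) atTop (𝓝 ⟪(0 : H), v⟫) :=
      Tendsto.inner hstrong tendsto_const_nhds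
    simpa using this
  have h2 : Tendsto (fun n => ⟪P (x n) - P z, v⟫) atTop (𝓝 (‖v‖ ^ 2)) := by
    have heq : ∀ n, ⟪P (x n) - P z, v⟫ = ⟪x n, v⟫ - ⟪x n - P (x n), v⟫ - ⟪P z, v⟫ := by
      intro n
      simp [inner_sub_left]
    have : Tendsto (fun n => ⟪x n, v⟫ - ⟪x n - P (x n), v⟫ - ⟪P z, v⟫) atTop
        (𝓝 (⟪z, v⟫ - 0 - ⟪P z, v⟫)) := ((hweak v).sub h1).sub tendsto_const_nhds
    rw [funext heq]
    convert this using 2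
    rw [sub_zero, ← inner_sub_left, ← hv, real_inner_self_eq_norm_sq]
  -- each term is ≤ 0 by the variational inequality at z
  have hle : ‖v‖ ^ 2 ≤ 0 := by
    refine le_of_tendsto h2 (Eventually.of_forall fun n => ?_)
    rw [real_inner_comm]
    exact varineq z (P (x n)) (hP (x n)).1
  have hvz : v = 0 := by
    have : ‖v‖ = 0 := by nlinarith [norm_nonneg v]
    simpa using this
  have hPz : P z = z := by
    have := sub_eq_zero.mp hvz
    exact this.symm
  exact ⟨hPz ▸ (hP z).1, hPz⟩
end
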